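/- Let q ∈ ERV_ρ(g) with q nondecreasing and unbounded, and suppose F is a distribution function with q(y) = U(e^y) for U the left-continuous inverse of 1/(1−F), so that the GW survival limit −y^{-1}log(1−F(x g(y)+q(y))) → h_ρ^{-1}(x) holds for x ∈ h_ρ((0,∞)). Let ρ̃(y) → ρ and g̃(y) ~ g(y), g̃ positive, and define q̃_y(z) := q(y)+g̃(y)h_{ρ̃(y)}(z/y) and ν_y(z) := log(1−F(q̃_y(z)))/log(1−F(q(z))) − 1. Then for every Λ > 1, sup_{λ∈[1/Λ,Λ]} |ν_y(yλ)| → 0 as y → ∞. -/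

import Mathlib

open Filter Real

noncomputable def h (ρ lam : ℝ) : ℝ := if ρ = 0 then Real.log lam else (lam ^ ρ - 1) / ρ

open Set Topology

/-!
Write `L = -log (1 - F)` and `q = U ∘ exp`. Both the numerator `L (q y + g̃ y * h_{ρ̃ y} λ)` and
the denominator `L (q (y λ))` are nondecreasing in `λ`, and after division by `y` both tend to `λ`
pointwise: the denominator by the survival limit at `λ = 1` taken along `y λ`, the numerator
because `g̃ y * h_{ρ̃ y} λ / g y → h_ρ λ` squeezes its argument between `h_ρ λ' * g y + q y` for
`λ' < λ < λ''`, where the survival limit applies. Monotone functions converging pointwise to a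
continuous limit converge uniformly on compact intervals (Pólya), and a uniform limit bounded
below by `Λ⁻¹` makes the ratio converge uniformly to `1`.
-/

lemma h_one (r : ℝ) : h r 1 = 0 := by
  unfold h; split_ifs <;> simp

lemma h_strictMonoOn (r : ℝ) : StrictMonoOn (h r) (Ioi 0) := by
  intro a (ha : 0 < a) b _ hab
  unfold h
  rcases lt_trichotomy r 0 with hr | rfl | hr
  · simp only [if_neg hr.ne]
    exact div_lt_div_of_neg_of_lt hr (by linarith [rpow_lt_rpow_of_neg ha hab hr])
  · simpa using log_lt_log ha hab
  · simp only [if_neg hr.ne']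
    exact div_lt_div_of_pos_right (by linarith [rpow_lt_rpow ha.le hab hr]) hr

lemma h_eq_log_mul_dslope_exp {l : ℝ} (hl : 0 < l) (r : ℝ) :
    h r l = log l * dslope exp 0 (r * log l) := by
  rcases eq_or_ne r 0 with rfl | hr
  · simp [h]
  rcases eq_or_ne (log l) 0 with hlog | hlog
  · have : l = 1 := eq_one_of_pos_of_log_eq_zero hl hlog
    simp [this, h_one]
  rw [dslope_of_ne _ (mul_ne_zero hr hlog), slope_def_field, h, if_neg hr,
    rpow_def_of_pos hl, mul_comm (log l) r]
  field_simp
  simp only [exp_zero]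
  ring

lemma continuous_dslope_exp : Continuous (dslope exp 0) :=
  continuousOn_univ.1 <| (continuousOn_dslope univ_mem).2
    ⟨continuous_exp.continuousOn, differentiableAt_exp⟩

lemma continuous_h_left {l : ℝ} (hl : 0 < l) : Continuous fun r => h r l := by
  simp_rw [h_eq_log_mul_dslope_exp hl]
  exact continuous_const.mul (continuous_dslope_exp.comp (continuous_mul_const _))

theorem tendstoUniformlyOn_Icc_of_monotoneOn {ι : Type*} {p : Filter ι} {f : ι → ℝ → ℝ}
    {φ : ℝ → ℝ} {a b : ℝ} (hmono : ∀ᶠ n in p, MonotoneOn (f n) (Icc a b))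
    (hφ : ContinuousOn φ (Icc a b))
    (hlim : ∀ x ∈ Icc a b, Tendsto (fun n => f n x) p (𝓝 (φ x))) :
    TendstoUniformlyOn f φ p (Icc a b) := by
  rw [← tendstoLocallyUniformlyOn_iff_tendstoUniformlyOn_of_compact isCompact_Icc,
    Metric.tendstoLocallyUniformlyOn_iff]
  intro ε hε x hx
  have hε₃ : 0 < ε / 3 := by positivity
  obtain ⟨δ, hδ, hφx⟩ := Metric.continuousWithinAt_iff.1 (hφ x hx) (ε / 3) hε₃
  -- on `Icc u v`, `f n` is squeezed between its values at the two fixed points `u` and `v`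
  set u := max a (x - δ / 2)
  set v := min b (x + δ / 2)
  have hu : u ∈ Icc a b := ⟨le_max_left _ _, max_le (hx.1.trans hx.2) (by linarith [hx.2])⟩
  have hv : v ∈ Icc a b := ⟨le_min (hx.1.trans hx.2) (by linarith [hx.1]), min_le_left _ _⟩
  have hIcc : Icc u v ⊆ Icc a b := Icc_subset_Icc hu.1 hv.2
  have hnear : ∀ y ∈ Icc u v, dist (φ y) (φ x) < ε / 3 := fun y hy =>
    hφx (hIcc hy) <| by
      rw [Real.dist_eq, abs_sub_lt_iff]
      constructor <;> linarith [hy.1, hy.2, le_max_right a (x - δ / 2), min_le_right b (x + δ / 2)]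
  refine ⟨Icc u v, ?_, ?_⟩
  · have hball : Ioo (x - δ / 2) (x + δ / 2) ∈ 𝓝 x := Ioo_mem_nhds (by linarith) (by linarith)
    filter_upwards [self_mem_nhdsWithin, nhdsWithin_le_nhds hball] with y hy hyδ
    exact ⟨max_le hy.1 hyδ.1.le, le_min hy.2 hyδ.2.le⟩
  · filter_upwards [hmono, (hlim u hu).eventually (Metric.ball_mem_nhds _ hε₃),
      (hlim v hv).eventually (Metric.ball_mem_nhds _ hε₃)] with n hn hnu hnv y hy
    have hfu : f n u ≤ f n y := hn hu (hIcc hy) hy.1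
    have hfv : f n y ≤ f n v := hn (hIcc hy) hv hy.2
    have hφu := hnear u ⟨le_rfl, hy.1.trans hy.2⟩
    have hφv := hnear v ⟨hy.1.trans hy.2, le_rfl⟩
    have hφy := hnear y hy
    rw [Real.dist_eq, abs_sub_lt_iff] at hnu hnv hφu hφv hφy ⊢
    constructor <;> linarith

theorem TendstoUniformlyOn.eventually_abs_div_sub_one_lt {ι α : Type*} {p : Filter ι}
    {s : Set α} {f g : ι → α → ℝ} {φ : α → ℝ} {c : ℝ} (hc : 0 < c) (hφ : ∀ x ∈ s, c ≤ φ x)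
    (hf : TendstoUniformlyOn f φ p s) (hg : TendstoUniformlyOn g φ p s) {ε : ℝ} (hε : 0 < ε) :
    ∀ᶠ n in p, ∀ x ∈ s, |f n x / g n x - 1| < ε := by
  set η := min (c / 2) (ε * c / 4)
  have hη : 0 < η := by positivity
  filter_upwards [Metric.tendstoUniformlyOn_iff.1 hf η hη,
    Metric.tendstoUniformlyOn_iff.1 hg η hη] with n hfn hgn x hx
  have hfx := hfn x hx
  have hgx := hgn x hx
  rw [Real.dist_eq, abs_sub_lt_iff] at hfx hgx
  have hη₁ : η ≤ c / 2 := min_le_left _ _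
  have hη₂ : η ≤ ε * c / 4 := min_le_right _ _
  have hcx := hφ x hx
  have hgx' : ε * c / 2 < ε * g n x := by nlinarith
  have hgpos : 0 < g n x := by linarith
  rw [div_sub_one hgpos.ne', abs_div, abs_of_pos hgpos, div_lt_iff₀ hgpos, abs_sub_lt_iff]
  constructor <;> linarith

noncomputable def negLogSurvival (F : ℝ → ℝ) (x : ℝ) : ℝ := -log (1 - F x)

lemma negLogSurvival_monotone {F : ℝ → ℝ} (hF : Monotone F) (hF1 : ∀ x, F x < 1) :
    Monotone (negLogSurvival F) := fun _ y hxy =>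
  neg_le_neg <| log_le_log (sub_pos.2 (hF1 y)) (sub_le_sub_left (hF hxy) 1)

/-- Since `log 0 = 0`, positivity of `-log (1 - F)` excludes `F = 1`. -/
lemma lt_one_of_frequently_negLogSurvival_pos {F q : ℝ → ℝ} (hF : Monotone F)
    (hF1 : ∀ x, F x ≤ 1) (hq : Tendsto q atTop atTop)
    (hpos : ∃ᶠ y in atTop, 0 < negLogSurvival F (q y)) (x : ℝ) : F x < 1 := by
  obtain ⟨y, hxy, hy⟩ := ((hq.eventually_ge_atTop x).and_frequently hpos).exists
  have hne : 1 - F (q y) ≠ 0 := fun h0 => by simp [negLogSurvival, h0] at hy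
  exact (hF hxy).trans_lt ((hF1 _).lt_of_ne fun h1 => hne (by rw [h1, sub_self]))

lemma tendsto_comp_mul_div {φ : ℝ → ℝ} (hφ : Tendsto (fun y => φ y / y) atTop (𝓝 1))
    {l : ℝ} (hl : 0 < l) : Tendsto (fun y => φ (y * l) / y) atTop (𝓝 l) := by
  have := (hφ.comp (tendsto_id.atTop_mul_const hl)).const_mul l
  rw [mul_one] at this
  refine this.congr' ?_
  filter_upwards [eventually_ne_atTop 0] with y hy
  simp only [Function.comp_apply, id]
  field_simp

theorem Monotone.tendsto_comp_add_div {L q g c : ℝ → ℝ} {ρ l : ℝ} (hL : Monotone L)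
    (hg : ∀ᶠ y in atTop, 0 < g y)
    (hGW : ∀ l > 0, Tendsto (fun y => L (h ρ l * g y + q y) / y) atTop (𝓝 l)) (hl : 0 < l)
    (hc : Tendsto (fun y => c y / g y) atTop (𝓝 (h ρ l))) :
    Tendsto (fun y => L (q y + c y) / y) atTop (𝓝 l) := by
  rw [tendsto_order]
  constructor
  · intro a ha
    obtain ⟨l', hl', hl'l⟩ := exists_between (max_lt ha hl)
    have hl'₀ : 0 < l' := (le_max_right _ _).trans_lt hl'
    have hh : h ρ l' < h ρ l := h_strictMonoOn ρ hl'₀ hl hl'l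
    filter_upwards [(hGW l' hl'₀).eventually (lt_mem_nhds ((le_max_left _ _).trans_lt hl')),
      hc.eventually (lt_mem_nhds hh), hg, eventually_gt_atTop 0] with y h1 h2 hgy hy
    refine h1.trans_le (div_le_div_of_nonneg_right (hL ?_) hy.le)
    linarith [(lt_div_iff₀ hgy).1 h2]
  · intro b hb
    obtain ⟨l', hl'l, hl'⟩ := exists_between hb
    have hh : h ρ l < h ρ l' := h_strictMonoOn ρ hl (hl.trans hl'l) hl'l
    filter_upwards [(hGW l' (hl.trans hl'l)).eventually (gt_mem_nhds hl'),
      hc.eventually (gt_mem_nhds hh), hg, eventually_gt_atTop 0] with y h1 h2 hgy hy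
    refine (div_le_div_of_nonneg_right (hL ?_) hy.le).trans_lt h1
    linarith [(div_lt_iff₀ hgy).1 h2]

theorem stmt14_general (F U g ρt gt : ℝ → ℝ) (ρ : ℝ)
    (hFmono : Monotone F) (hF1 : ∀ x, F x ≤ 1)
    (hmono : Monotone U)
    (hinf : Tendsto U atTop atTop)
    (hgpos : ∀ y, 0 < g y) (hgtpos : ∀ y, 0 < gt y)
    (hGWsurv : ∀ l : ℝ, 0 < l →
      Tendsto (fun y => -(Real.log (1 - F (h ρ l * g y + U (Real.exp y)))) / y)
        atTop (nhds l))
    (hρt : Tendsto ρt atTop (nhds ρ))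
    (hgt : Tendsto (fun y => gt y / g y) atTop (nhds 1)) :
    ∀ Λ : ℝ, 1 < Λ → ∀ ε : ℝ, 0 < ε → ∀ᶠ y in atTop,
      ∀ l ∈ Set.Icc Λ⁻¹ Λ,
        |Real.log (1 - F (U (Real.exp y) + gt y * h (ρt y) l)) /
            Real.log (1 - F (U (Real.exp (y * l)))) - 1| < ε := by
  intro Λ hΛ ε hε
  have hΛ₀ : 0 < Λ⁻¹ := inv_pos.2 (zero_lt_one.trans hΛ)
  have hGW : ∀ l > 0, Tendsto (fun y => negLogSurvival F (h ρ l * g y + U (exp y)) / y)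
      atTop (𝓝 l) := hGWsurv
  have hbase : Tendsto (fun y => negLogSurvival F (U (exp y)) / y) atTop (𝓝 1) := by
    simpa [h_one] using hGW 1 one_pos
  have hF : ∀ x, F x < 1 := by
    refine lt_one_of_frequently_negLogSurvival_pos hFmono hF1 (hinf.comp tendsto_exp_atTop) ?_
    refine Eventually.frequently ?_
    filter_upwards [hbase.eventually (lt_mem_nhds one_pos), eventually_gt_atTop 0] with y h1 hy
    exact (div_pos_iff_of_pos_right hy).1 h1
  have hL := negLogSurvival_monotone hFmono hF
  have hnum : TendstoUniformlyOn
      (fun y l => negLogSurvival F (U (exp y) + gt y * h (ρt y) l) / y) id atTop (Icc Λ⁻¹ Λ) := by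
    refine tendstoUniformlyOn_Icc_of_monotoneOn ?_ continuousOn_id fun l hl => ?_
    · filter_upwards [eventually_gt_atTop 0] with y hy a ha b hb hab
      have hh := (h_strictMonoOn (ρt y)).monotoneOn (hΛ₀.trans_le ha.1) (hΛ₀.trans_le hb.1) hab
      exact div_le_div_of_nonneg_right
        (hL (add_le_add_right (mul_le_mul_of_nonneg_left hh (hgtpos y).le) _)) hy.le
    · have hl₀ : 0 < l := hΛ₀.trans_le hl.1
      refine hL.tendsto_comp_add_div (.of_forall hgpos) hGW hl₀ ?_
      have := hgt.mul (((continuous_h_left hl₀).tendsto ρ).comp hρt)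
      simpa [mul_div_right_comm] using this
  have hden : TendstoUniformlyOn
      (fun y l => negLogSurvival F (U (exp (y * l))) / y) id atTop (Icc Λ⁻¹ Λ) := by
    refine tendstoUniformlyOn_Icc_of_monotoneOn ?_ continuousOn_id fun l hl =>
      tendsto_comp_mul_div hbase (hΛ₀.trans_le hl.1)
    filter_upwards [eventually_gt_atTop 0] with y hy a _ b _ hab
    exact div_le_div_of_nonneg_right
      (hL (hmono (exp_le_exp.2 (mul_le_mul_of_nonneg_left hab hy.le)))) hy.le
  filter_upwards [hnum.eventually_abs_div_sub_one_lt hΛ₀ (fun l hl => hl.1) hden hε,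
    eventually_gt_atTop 0] with y hy hy₀ l hl
  simpa [negLogSurvival, neg_div_neg_eq, div_div_div_cancel_right₀ hy₀.ne'] using hy l hl

theorem stmt14 (F U g ρt gt : ℝ → ℝ) (ρ : ℝ)
    (hFmono : Monotone F) (hF0 : ∀ x, 0 ≤ F x) (hF1 : ∀ x, F x ≤ 1)
    (hU : ∀ t, U t = sInf {x : ℝ | t ≤ 1 / (1 - F x)})
    (hmono : Monotone U)
    (hinf : Tendsto U atTop atTop)
    (hgpos : ∀ y, 0 < g y) (hgtpos : ∀ y, 0 < gt y)
    (hERV : ∀ l : ℝ, 0 < l →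
      Tendsto (fun y => (U (Real.exp (y * l)) - U (Real.exp y)) / g y)
        atTop (nhds (h ρ l)))
    (hGWsurv : ∀ l : ℝ, 0 < l →
      Tendsto (fun y => -(Real.log (1 - F (h ρ l * g y + U (Real.exp y)))) / y)
        atTop (nhds l))
    (hρt : Tendsto ρt atTop (nhds ρ))
    (hgt : Tendsto (fun y => gt y / g y) atTop (nhds 1)) :
    ∀ Λ : ℝ, 1 < Λ → ∀ ε : ℝ, 0 < ε → ∀ᶠ y in atTop,
      ∀ l ∈ Set.Icc Λ⁻¹ Λ,
        |Real.log (1 - F (U (Real.exp y) + gt y * h (ρt y) l)) /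
            Real.log (1 - F (U (Real.exp (y * l)))) - 1| < ε :=
  stmt14_general F U g ρt gt ρ hFmono hF1 hmono hinf hgpos hgtpos hGWsurv hρt hgt
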